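/- arXiv:2511.22588 — 3 statements merged into one kernel-verified Lean document; each statement's English description precedes it below -/
import Mathlib

section
/- Let w be a primitive word over the ordered alphabet A = {a_1 < … < a_k} which is π-clustering for a permutation π of A. Let a, b ∈ A with b = a_1 (the smallest letter), and suppose there is an index i with 1 ≤ i < k such that π⁻¹(a) = a_i and π⁻¹(b) = a_{i+1}. Then there exists a permutation π' of A such that α_{a,b}(w) is π'-clustering for A, where α_{a,b} is the monoid morphism sending a to ab and fixing all other letters. -/
/-!
Every rotation of `α(w)` is either `α(r)` for a rotation `r` of `w`, or, for each rotation
`a :: u` of `w`, the new rotation `b :: α(u) ++ [a]`. On words of equal length `α` preserves the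
lexicographic order, and every new rotation precedes every `α(r)`: this is clear unless `r` starts
with the minimal letter `b`, say `r = b :: t`, and then it follows from `u ++ [a] ≤ t ++ [b]`, which
holds because clustering puts every `a` before every `b` in `bwt w`. Hence `bwt (α w)` is
`a ^ |w|_a` followed by `bwt w` with each `a` replaced by `b`. Since `π⁻¹ b` covers `π⁻¹ a`, this
word is sorted for the order `π⁻¹` with `a` moved to the bottom, and a word whose BWT is sorted for
some order of the alphabet is clustering for the corresponding permutation.
-/

/-- `wordPow u p` is the `p`-fold concatenation `u^p`. -/
def wordPow {A : Type*} (u : List A) : ℕ → List A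
  | 0 => []
  | n + 1 => u ++ wordPow u n

/-- A word is primitive if it is not a proper integer power of another word. -/
def Primitive {A : Type*} (w : List A) : Prop :=
  ∀ (v : List A) (m : ℕ), w = wordPow v m → m = 1

/-- The Burrows–Wheeler transform of a word: the last letters of its cyclic rotations
listed in non-decreasing lexicographic order. -/
def bwt {A : Type*} [LinearOrder A] (w : List A) : List A :=
  (Multiset.sort
    (((List.range w.length).map (fun i => w.rotate i) : List (List A)) : Multiset (List A)) (· ≤ ·)).filterMap
    List.getLast?

/-- `w` is `π`-clustering: its BWT is `π(a₁)^{k₁} ⋯ π(a_k)^{k_k}` where `a₁ < … < a_k`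
enumerates the alphabet and `k_i` is the number of occurrences of `π(a_i)` in `w`. -/
def Clustering {A : Type*} [LinearOrder A] [Fintype A] (π : Equiv.Perm A) (w : List A) : Prop :=
  bwt w =
    ((Finset.univ.sort (· ≤ ·)).map (fun a => List.replicate (w.count (π a)) (π a))).flatten

open List

section Rotations

variable {α β : Type*}

def rotations (w : List α) : List (List α) :=
  (range w.length).map fun i => w.rotate i

theorem length_rotations (w : List α) : (rotations w).length = w.length := by
  simp [rotations]

theorem perm_of_mem_rotations {w x : List α} (hx : x ∈ rotations w) : x ~ w := by
  obtain ⟨i, -, rfl⟩ := mem_map.mp hx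
  exact rotate_perm w i

theorem ne_nil_of_mem_rotations {w x : List α} (hx : x ∈ rotations w) : x ≠ [] := by
  obtain ⟨i, hi, rfl⟩ := mem_map.mp hx
  exact (rotate_eq_nil_iff).not.mpr (ne_nil_of_length_pos (Nat.zero_lt_of_lt (mem_range.mp hi)))

theorem rotate_mem_rotations {w x : List α} (hx : x ∈ rotations w) (k : ℕ) :
    x.rotate k ∈ rotations w := by
  obtain ⟨i, hi, rfl⟩ := mem_map.mp hx
  have hn : 0 < w.length := Nat.zero_lt_of_lt (mem_range.mp hi)
  exact mem_map.mpr ⟨(i + k) % w.length, mem_range.mpr (Nat.mod_lt _ hn), by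
    rw [rotate_mod, rotate_rotate]⟩

theorem rotations_perm_map_rotate_succ (w : List α) :
    rotations w ~ (range w.length).map fun i => w.rotate (i + 1) := by
  have h : rotations w ++ [w] = w :: (range w.length).map fun i => w.rotate (i + 1) := by
    have h₁ := congrArg (map w.rotate) (range_succ (n := w.length))
    rw [range_succ_eq_map, map_append, map_cons, map_map] at h₁
    simpa [rotations, Function.comp_def] using h₁.symm
  exact (perm_cons w).mp (h ▸ perm_append_singleton w _).symm

theorem filterMap_getElem?_range (w : List α) : (range w.length).filterMap (w[·]?) = w := by
  induction w using reverseRecOn with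
  | nil => rfl
  | append_singleton t c ih =>
    rw [length_append, length_singleton, range_succ, filterMap_append]
    conv_rhs => rw [← ih]
    refine congrArg₂ (· ++ ·) (filterMap_congr fun i hi => ?_) (by simp)
    exact getElem?_append_left (mem_range.mp hi)

def blockRotations (f : α → List β) : List α → List (List β)
  | [] => []
  | c :: u => (range (f c).length).map fun j => (f c).drop j ++ u.flatMap f ++ (f c).take j

theorem range_length_flatMap (f : α → List β) (w : List α) (d : α) :
    range (w.flatMap f).length = (range w.length).flatMap fun s =>
      (range (f (w.getD s d)).length).map (((w.take s).flatMap f).length + ·) := by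
  induction w with
  | nil => rfl
  | cons c t ih =>
    rw [flatMap_cons, length_append, range_add, ih, length_cons, range_succ_eq_map]
    simp [map_flatMap, flatMap_map, Function.comp_def, Nat.add_assoc]

theorem rotate_flatMap_offset (f : α → List β) {w : List α} {s : ℕ} (hs : s < w.length)
    {j : ℕ} (hj : j ≤ (f w[s]).length) :
    (w.flatMap f).rotate (((w.take s).flatMap f).length + j) =
      (f w[s]).drop j ++ (w.drop (s + 1) ++ w.take s).flatMap f ++ (f w[s]).take j := by
  have hsplit : w.flatMap f = (w.take s).flatMap f ++ (f w[s] ++ (w.drop (s + 1)).flatMap f) := by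
    conv_lhs => rw [← take_append_drop s w, drop_eq_getElem_cons hs]
    rw [flatMap_append, flatMap_cons]
  rw [hsplit, rotate_eq_drop_append_take (by simp; omega),
    drop_length_add_append, take_length_add_append, drop_append_of_le_length hj,
    take_append_of_le_length hj, flatMap_append]
  simp only [append_assoc]

theorem rotations_flatMap (f : α → List β) (w : List α) :
    rotations (w.flatMap f) = (rotations w).flatMap (blockRotations f) := by
  cases w with
  | nil => rfl
  | cons d t =>
    rw [rotations, range_length_flatMap f _ d, map_flatMap, rotations, flatMap_map]
    refine flatMap_congr fun s hs' => ?_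
    have hs : s < (d :: t).length := mem_range.mp hs'
    rw [rotate_eq_drop_append_take hs.le, drop_eq_getElem_cons hs, cons_append, blockRotations,
      getD_eq_getElem _ _ hs, map_map]
    exact map_congr_left fun j hj =>
      rotate_flatMap_offset f hs (Nat.le_of_lt (mem_range.mp hj))

theorem flatMap_cons_perm (g : α → β) (h : α → List β) (l : List α) :
    (l.flatMap fun x => g x :: h x) ~ l.map g ++ l.flatMap h := by
  induction l with
  | nil => rfl
  | cons x t ih =>
    simp only [flatMap_cons, map_cons, cons_append]
    refine (ih.append_left _).cons _ |>.trans (Perm.cons _ ?_)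
    exact perm_append_comm_assoc _ _ _

end Rotations

section BWT

variable {α β : Type*} [LinearOrder α]

def sortedRotations (w : List α) : List (List α) :=
  Multiset.sort (rotations w : Multiset (List α)) (· ≤ ·)

theorem bwt_eq_filterMap_sortedRotations (w : List α) :
    bwt w = (sortedRotations w).filterMap getLast? := rfl

theorem sortedRotations_perm (w : List α) : sortedRotations w ~ rotations w :=
  Multiset.coe_eq_coe.mp (Multiset.sort_eq _ _)

theorem sortedRotations_eq_of_perm {w : List α} {l : List (List α)} (hl : l ~ rotations w)
    (hs : l.Pairwise (· ≤ ·)) : sortedRotations w = l :=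
  Perm.eq_of_pairwise' (Multiset.pairwise_sort _ _) hs ((sortedRotations_perm w).trans hl.symm)

theorem bwt_perm (w : List α) : bwt w ~ w := by
  have hlast : ∀ i ∈ range w.length, (w.rotate (i + 1)).getLast? = w[i]? := fun i hi => by
    have hi : i < w.length := mem_range.mp hi
    rw [rotate_eq_drop_append_take hi, getLast?_append, getLast?_take, getElem?_eq_getElem hi]
    simp
  calc bwt w ~ (rotations w).filterMap getLast? := (sortedRotations_perm w).filterMap _
    _ ~ ((range w.length).map fun i => w.rotate (i + 1)).filterMap getLast? :=
      (rotations_perm_map_rotate_succ w).filterMap _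
    _ = w := by
      conv_rhs => rw [← filterMap_getElem?_range w]
      rw [filterMap_map]
      exact filterMap_congr hlast

theorem le_of_mem_rotations_of_pairwise_bwt [Preorder β] {κ : α → β} {w x y : List α} {c d : α}
    (hs : (bwt w).Pairwise (fun c d => κ c ≤ κ d)) (hcd : κ c < κ d)
    (hx : x ∈ rotations w) (hy : y ∈ rotations w)
    (hxc : x.getLast? = some c) (hyd : y.getLast? = some d) : x ≤ y := by
  have hS := (Multiset.pairwise_sort _ _).and (pairwise_filterMap.mp hs)
  refine Pairwise.forall_of_forall_of_flip
    (R := fun p q => p.getLast? = some c → q.getLast? = some d → p ≤ q) ?_ (hS.imp ?_) (hS.imp ?_)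
    ((Multiset.mem_sort _).mpr hx) ((Multiset.mem_sort _).mpr hy) hxc hyd
  · exact fun p _ _ _ => le_rfl
  · exact fun h _ _ => h.1
  · exact fun h hqc hpd => absurd (h.2 d hpd c hqc) hcd.not_ge

end BWT

section Clustering

variable {A β : Type*} [LinearOrder A] [Fintype A]

def clusterWord (π : Equiv.Perm A) (w : List A) : List A :=
  ((Finset.univ.sort (· ≤ ·)).map fun a => replicate (w.count (π a)) (π a)).flatten

theorem clusterWord_perm (π : Equiv.Perm A) (w : List A) : clusterWord π w ~ w := by
  refine perm_iff_count.mpr fun c => ?_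
  rw [clusterWord, count_flatten, map_map, ← Multiset.sum_coe, ← Multiset.map_coe,
    Finset.sort_eq, ← Finset.sum_eq_multiset_sum]
  simp only [Function.comp_apply, count_replicate, beq_iff_eq]
  exact (Equiv.sum_comp π fun y => if y = c then w.count y else 0).trans (by simp)

theorem pairwise_clusterWord [Preorder β] {κ : A → β} {π : Equiv.Perm A} (hκ : Monotone (κ ∘ π))
    (w : List A) : (clusterWord π w).Pairwise (fun c d => κ c ≤ κ d) := by
  refine pairwise_flatten.mpr ⟨fun l hl => ?_, pairwise_map.mpr ?_⟩
  · obtain ⟨x, -, rfl⟩ := mem_map.mp hl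
    exact pairwise_replicate.mpr (Or.inr le_rfl)
  · refine (Finset.pairwise_sort _ _).imp fun hxy c hc d hd => ?_
    rw [eq_of_mem_replicate hc, eq_of_mem_replicate hd]
    exact hκ hxy

theorem Clustering.pairwise_bwt {π : Equiv.Perm A} {w : List A} (hc : Clustering π w) :
    (bwt w).Pairwise (fun c d => π.symm c ≤ π.symm d) :=
  hc ▸ pairwise_clusterWord (fun x y h => by simpa using h) w

theorem clustering_of_pairwise_bwt [PartialOrder β] {κ : A → β} {π : Equiv.Perm A}
    (hκ : StrictMono (κ ∘ π)) {w : List A} (hs : (bwt w).Pairwise (fun c d => κ c ≤ κ d)) :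
    Clustering π w := by
  have hinj : Function.Injective κ := fun c d h => by
    simpa using hκ.injective (a₁ := π.symm c) (a₂ := π.symm d) (by simpa using h)
  exact Perm.eq_of_pairwise (fun c d _ _ h₁ h₂ => hinj (le_antisymm h₁ h₂)) hs
    (pairwise_clusterWord hκ.monotone w) ((bwt_perm w).trans (clusterWord_perm π w).symm)

theorem exists_perm_strictMono_comp [LinearOrder β] {κ : A → β} (hκ : Function.Injective κ) :
    ∃ π : Equiv.Perm A, StrictMono (κ ∘ π) := by
  let e := Fintype.orderIsoFinOfCardEq A rfl
  let σ := Tuple.sort (κ ∘ e)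
  refine ⟨e.symm.toEquiv.trans (σ.trans e.toEquiv), Monotone.strictMono_of_injective ?_ ?_⟩
  · exact (Tuple.monotone_sort (κ ∘ e)).comp e.symm.monotone
  · exact hκ.comp (Equiv.injective _)

theorem exists_clustering_of_pairwise_bwt [LinearOrder β] {κ : A → β}
    (hκ : Function.Injective κ) {w : List A} (hs : (bwt w).Pairwise (fun c d => κ c ≤ κ d)) :
    ∃ π : Equiv.Perm A, Clustering π w :=
  (exists_perm_strictMono_comp hκ).imp fun _ hπ => clustering_of_pairwise_bwt hπ hs

end Clustering

section Lex

variable {α : Type*} [LinearOrder α]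

theorem append_lt_append_of_lt_of_length_eq {x y : List α} (hlen : x.length = y.length)
    (hlt : x < y) (s t : List α) : x ++ s < y ++ t := by
  induction hlt with
  | nil => simp at hlen
  | rel h => exact .rel h
  | cons _ ih => exact .cons (ih (by simpa using hlen))

theorem le_of_append_le_append_of_length_eq {x y s t : List α} (hlen : x.length = y.length)
    (hle : x ++ s ≤ y ++ t) : x ≤ y :=
  not_lt.mp fun hyx => (append_lt_append_of_lt_of_length_eq hlen.symm hyx t s).not_ge hle

theorem flatMap_lt_flatMap_of_length_eq {f : α → List α} (hf : ∀ c, ∃ t, f c = c :: t)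
    {x y : List α} (hlen : x.length = y.length) (hlt : x < y) : x.flatMap f < y.flatMap f := by
  induction hlt with
  | nil => simp at hlen
  | @rel c _ d _ h =>
    obtain ⟨t₁, ht₁⟩ := hf c
    obtain ⟨t₂, ht₂⟩ := hf d
    simp only [flatMap_cons, ht₁, ht₂, cons_append]
    exact .rel h
  | cons _ ih => exact append_left_lt (ih (by simpa using hlen))

theorem flatMap_le_flatMap_of_length_eq {f : α → List α} (hf : ∀ c, ∃ t, f c = c :: t)
    {x y : List α} (hlen : x.length = y.length) (hle : x ≤ y) : x.flatMap f ≤ y.flatMap f := by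
  rcases hle.lt_or_eq with hlt | rfl
  · exact le_of_lt (flatMap_lt_flatMap_of_length_eq hf hlen hlt)
  · exact le_rfl

end Lex

section AlphaMorph

variable {α : Type*} [DecidableEq α] (a b : α)

def alphaMorph (w : List α) : List α :=
  w.flatMap fun c => if c = a then [a, b] else [c]

def replaceLetter (c : α) : α :=
  if c = a then b else c

/-- For a rotation `a :: u` of `w`, the rotation of `alphaMorph a b w` that starts at the `b`
inserted after this `a`. -/
def alphaNewRotations : List α → List (List α)
  | [] => []
  | c :: u => if c = a then [b :: (alphaMorph a b u ++ [a])] else []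

variable {a b}

@[simp]
theorem alphaMorph_nil : alphaMorph a b [] = [] := rfl

@[simp]
theorem alphaMorph_cons (c : α) (w : List α) :
    alphaMorph a b (c :: w) = (if c = a then [a, b] else [c]) ++ alphaMorph a b w :=
  flatMap_cons

@[simp]
theorem alphaMorph_append (x y : List α) :
    alphaMorph a b (x ++ y) = alphaMorph a b x ++ alphaMorph a b y :=
  flatMap_append

theorem length_alphaMorph (w : List α) : (alphaMorph a b w).length = w.length + w.count a := by
  induction w with
  | nil => rfl
  | cons c t ih => by_cases h : c = a <;> simp [h, ih] <;> omega

theorem getLast?_alphaMorph (w : List α) :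
    (alphaMorph a b w).getLast? = w.getLast?.map (replaceLetter a b) := by
  induction w using reverseRecOn with
  | nil => rfl
  | append_singleton t c _ => by_cases h : c = a <;> simp [h, replaceLetter]

theorem replaceLetter_ne (hab : a ≠ b) (c : α) : replaceLetter a b c ≠ a := by
  unfold replaceLetter
  split_ifs with h
  exacts [hab.symm, h]

theorem getLast?_of_mem_alphaNewRotations {r e : List α} (he : e ∈ alphaNewRotations a b r) :
    e.getLast? = some a := by
  match r with
  | c :: u =>
    by_cases h : c = a
    · obtain rfl : e = b :: (alphaMorph a b u ++ [a]) := by simpa [alphaNewRotations, h] using he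
      rw [← cons_append, getLast?_concat]
    · simp [alphaNewRotations, h] at he

theorem rotations_alphaMorph_perm (w : List α) :
    rotations (alphaMorph a b w) ~
      (rotations w).map (alphaMorph a b) ++ (rotations w).flatMap (alphaNewRotations a b) := by
  rw [alphaMorph, rotations_flatMap]
  refine (Perm.of_eq (flatMap_congr fun r hr => ?_)).trans (flatMap_cons_perm _ _ _)
  obtain ⟨c, u, rfl⟩ := exists_cons_of_ne_nil (ne_nil_of_mem_rotations hr)
  by_cases h : c = a
  · subst h; simp [blockRotations, alphaNewRotations, alphaMorph, range_succ]
  · simp [blockRotations, alphaNewRotations, alphaMorph, h]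

end AlphaMorph

section BwtAlphaMorph

variable {A : Type*} [LinearOrder A] {a b : A} {w : List A}

theorem alphaMorph_le_alphaMorph {x y : List A} (hlen : x.length = y.length) (hle : x ≤ y) :
    alphaMorph a b x ≤ alphaMorph a b y :=
  flatMap_le_flatMap_of_length_eq
    (fun c => ⟨if c = a then [b] else [], by by_cases h : c = a <;> simp [h]⟩) hlen hle

theorem le_alphaMorph_of_mem_alphaNewRotations (hab : a ≠ b) (hb : ∀ c, b ≤ c)
    (hrot : ∀ x ∈ rotations w, ∀ y ∈ rotations w,
      x.getLast? = some a → y.getLast? = some b → x ≤ y)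
    {r r' e : List A} (hr : r ∈ rotations w) (hr' : r' ∈ rotations w)
    (he : e ∈ alphaNewRotations a b r) : e ≤ alphaMorph a b r' := by
  obtain ⟨c, u, rfl⟩ := exists_cons_of_ne_nil (ne_nil_of_mem_rotations hr)
  obtain ⟨d, t, rfl⟩ := exists_cons_of_ne_nil (ne_nil_of_mem_rotations hr')
  by_cases hca : c = a
  swap
  · simp [alphaNewRotations, hca] at he
  subst hca
  obtain rfl : e = b :: (alphaMorph c b u ++ [c]) := by simpa [alphaNewRotations] using he
  rcases (hb d).lt_or_eq with hbd | rfl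
  · refine le_of_lt ?_
    by_cases hdc : d = c <;> simp only [alphaMorph_cons, hdc, if_true, if_false, cons_append]
    all_goals exact .rel (by simpa [hdc] using hbd)
  · have hrr' := (perm_of_mem_rotations hr).trans (perm_of_mem_rotations hr').symm
    have hlen : u.length = t.length := by simpa using hrr'.length_eq
    have hcount : u.count c + 1 = t.count c := by simpa [count_cons, hab.symm] using hrr'.count_eq c
    have hrot' : u ++ [c] ≤ t ++ [b] :=
      hrot _ (by simpa using rotate_mem_rotations hr 1) _
        (by simpa using rotate_mem_rotations hr' 1) (by simp) (by simp)
    have h := alphaMorph_le_alphaMorph (a := c) (b := b) (by simp [hlen]) hrot'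
    simp only [alphaMorph_append, alphaMorph_cons, alphaMorph_nil, if_true, if_neg hab.symm,
      append_nil] at h
    rw [alphaMorph_cons, if_neg hab.symm, singleton_append, ← not_lt, cons_lt_cons_self, not_lt]
    refine le_of_append_le_append_of_length_eq (s := [b]) (t := [b]) ?_ (by simpa using h)
    simp [length_alphaMorph]
    omega

theorem length_flatMap_alphaNewRotations (w : List A) :
    ((rotations w).flatMap (alphaNewRotations a b)).length = w.count a := by
  have h := (rotations_alphaMorph_perm (a := a) (b := b) w).length_eq
  simp only [length_append, length_map, length_rotations, length_alphaMorph] at h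
  omega

theorem sortedRotations_alphaMorph (hab : a ≠ b) (hb : ∀ c, b ≤ c)
    (hrot : ∀ x ∈ rotations w, ∀ y ∈ rotations w,
      x.getLast? = some a → y.getLast? = some b → x ≤ y) :
    sortedRotations (alphaMorph a b w) =
      Multiset.sort ((rotations w).flatMap (alphaNewRotations a b) : Multiset (List A)) (· ≤ ·) ++
        (sortedRotations w).map (alphaMorph a b) := by
  set N := (rotations w).flatMap (alphaNewRotations a b)
  have hE : Multiset.sort (N : Multiset (List A)) (· ≤ ·) ~ N :=
    Multiset.coe_eq_coe.mp (Multiset.sort_eq _ _)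
  have hmem : ∀ {x}, x ∈ sortedRotations w → x ∈ rotations w := (sortedRotations_perm w).mem_iff.mp
  refine sortedRotations_eq_of_perm (((hE.append ((sortedRotations_perm w).map _)).trans
    perm_append_comm).trans (rotations_alphaMorph_perm w).symm) ?_
  refine pairwise_append.mpr ⟨Multiset.pairwise_sort _ _, pairwise_map.mpr ?_, ?_⟩
  · refine (Multiset.pairwise_sort _ _).imp_of_mem fun hx hy hxy => ?_
    exact alphaMorph_le_alphaMorph
      ((perm_of_mem_rotations (hmem hx)).trans (perm_of_mem_rotations (hmem hy)).symm).length_eq hxy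
  · intro e he x hx
    obtain ⟨r', hr', rfl⟩ := mem_map.mp hx
    obtain ⟨r, hr, her⟩ := mem_flatMap.mp (hE.mem_iff.mp he)
    exact le_alphaMorph_of_mem_alphaNewRotations hab hb hrot hr (hmem hr') her

theorem bwt_alphaMorph (hab : a ≠ b) (hb : ∀ c, b ≤ c)
    (hrot : ∀ x ∈ rotations w, ∀ y ∈ rotations w,
      x.getLast? = some a → y.getLast? = some b → x ≤ y) :
    bwt (alphaMorph a b w) = replicate (w.count a) a ++ (bwt w).map (replaceLetter a b) := by
  rw [bwt_eq_filterMap_sortedRotations, sortedRotations_alphaMorph hab hb hrot, filterMap_append,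
    filterMap_map, bwt_eq_filterMap_sortedRotations, map_filterMap]
  congr 1
  · rw [filterMap_congr (g := fun _ => some a), filterMap_eq_map', map_const', Multiset.length_sort,
      Multiset.coe_card, length_flatMap_alphaNewRotations]
    intro e he
    obtain ⟨r, -, her⟩ := mem_flatMap.mp (Multiset.mem_coe.mp ((Multiset.mem_sort _).mp he))
    exact getLast?_of_mem_alphaNewRotations her
  · exact filterMap_congr fun x _ => getLast?_alphaMorph x

end BwtAlphaMorph

theorem replaceLetter_le_replaceLetter_of_covBy {A β : Type*} [DecidableEq A] [LinearOrder β]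
    {κ : A → β} (hκ : Function.Injective κ) {a b : A} (hcov : κ a ⋖ κ b) {x y : A}
    (hxy : κ x ≤ κ y) : κ (replaceLetter a b x) ≤ κ (replaceLetter a b y) := by
  unfold replaceLetter
  split_ifs with hx hy hy
  · exact le_rfl
  · subst hx
    exact not_lt.mp (hcov.2 (hxy.lt_of_ne (hκ.ne (Ne.symm hy))))
  · subst hy
    exact hxy.trans hcov.le
  · exact hxy

theorem clustering_alpha_bottom_general {A : Type*} [LinearOrder A] [Fintype A] (w : List A)
    (π : Equiv.Perm A) (hc : Clustering π w) (a b : A)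
    (hb : ∀ c : A, b ≤ c) (hcov : π.symm a ⋖ π.symm b) :
    ∃ π' : Equiv.Perm A,
      Clustering π' (w.flatMap fun c => if c = a then [a, b] else [c]) := by
  have hab : a ≠ b := fun h => hcov.lt.ne (congrArg π.symm h)
  have hsort := hc.pairwise_bwt
  have hbwt := bwt_alphaMorph hab hb fun x hx y hy hxa hyb =>
    le_of_mem_rotations_of_pairwise_bwt hsort hcov.lt hx hy hxa hyb
  let κ : A → WithBot A := fun c => if c = a then ⊥ else π.symm c
  have hκ : Function.Injective κ := fun x y h => by
    by_cases hx : x = a <;> by_cases hy : y = a <;> simp_all [κ]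
  have hκ_replace : ∀ c, κ (replaceLetter a b c) = π.symm (replaceLetter a b c) := fun c =>
    if_neg (replaceLetter_ne hab c)
  refine exists_clustering_of_pairwise_bwt hκ (w := alphaMorph a b w) ?_
  rw [hbwt, pairwise_append, pairwise_map]
  refine ⟨pairwise_replicate.mpr (Or.inr le_rfl), hsort.imp fun hxy => ?_, fun x hx _ _ => ?_⟩
  · rw [hκ_replace, hκ_replace, WithBot.coe_le_coe]
    exact replaceLetter_le_replaceLetter_of_covBy π.symm.injective hcov hxy
  · simp [κ, eq_of_mem_replicate hx]

/-- If `w` is primitive and `π`-clustering, `b` is the smallest letter of the alphabet, and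
`π⁻¹(b)` is the immediate successor of `π⁻¹(a)` in the alphabet order, then `α_{a,b}(w)` is
`π'`-clustering for some permutation `π'` of the same alphabet. -/
theorem clustering_alpha_bottom {A : Type*} [LinearOrder A] [Fintype A] (w : List A)
    (hw : Primitive w) (π : Equiv.Perm A) (hc : Clustering π w) (a b : A)
    (hb : ∀ c : A, b ≤ c) (hcov : π.symm a ⋖ π.symm b) :
    ∃ π' : Equiv.Perm A,
      Clustering π' (w.flatMap fun c => if c = a then [a, b] else [c]) :=
  clustering_alpha_bottom_general w π hc a b hb hcov
end

section
/- Let w be a primitive word over the ordered alphabet A = {a_1 < … < a_k} which is π-clustering for a permutation π of A, let a ∈ A, and let b be a letter not in A. Then there exists a permutation π' of A' = {a_1 < … < a_k < b} such that α_{a,b}(w), viewed as a word over A', is π'-clustering for A'; and there exists a permutation π'' of A'' = {b < a_1 < … < a_k} such that α_{a,b}(w), viewed as a word over A'', is π''-clustering for A''. Here α_{a,b} is the monoid morphism sending a to ab and fixing all other letters. -/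
instance {A : Type*} [Fintype A] : Fintype (WithTop A) :=
  inferInstanceAs (Fintype (Option A))

instance {A : Type*} [Fintype A] : Fintype (WithBot A) :=
  inferInstanceAs (Fintype (Option A))

/-!
Every rotation of `α_{a,b}(w)` is either the image under `α_{a,b}` of a rotation of `w`, or
begins at one of the `|w|_a` inserted letters `b`; a rotation of the second kind ends with `a`.
Since `α_{a,b}` is strictly monotone for the lexicographic order, and the rotations beginning
with `b` all come after (if `b` is maximal) or before (if `b` is minimal) the others, the BWT of
`α_{a,b}(w)` is `bwt w` with each `a` renamed `b`, followed (resp. preceded) by `a^{|w|_a}`.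
Composing `π` with the transposition of `a` and `b` therefore makes `α_{a,b}(w)` clustering.
-/

namespace BurrowsWheeler

variable {A B : Type*}

section Rotations

def rotationsFrom (v u : List A) : List (List A) :=
  (List.range v.length).map (v ++ u).rotate

lemma rotationsFrom_cons (c : A) (v u : List A) :
    rotationsFrom (c :: v) u = (c :: (v ++ u)) :: rotationsFrom v (u ++ [c]) := by
  simp [rotationsFrom, List.range_succ_eq_map, List.rotate_cons_succ]

def rotations (w : List A) : Multiset (List A) :=
  (List.range w.length).map w.rotate

lemma ne_nil_of_mem_rotations {w x : List A} (hx : x ∈ rotations w) : x ≠ [] := by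
  obtain ⟨i, hi, rfl⟩ := List.mem_map.1 (Multiset.mem_coe.1 hx)
  rw [List.mem_range] at hi
  rw [← List.length_pos_iff, List.length_rotate]
  omega

lemma rotations_eq_rotationsFrom (w : List A) : rotations w = rotationsFrom w [] := by
  simp [rotations, rotationsFrom]

lemma bwt_eq [LinearOrder A] (w : List A) :
    bwt w = ((rotations w).sort (· ≤ ·)).filterMap List.getLast? := rfl

end Rotations

section Alpha

variable [DecidableEq A] (e : A → B) (a : A) (b : B)

/-- `α_{a,b}` followed by the embedding `e` of the old alphabet into the new one. -/
def alpha (w : List A) : List B :=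
  w.flatMap fun c => if c = a then [e a, b] else [e c]

variable {e a b}

lemma alpha_append (u v : List A) : alpha e a b (u ++ v) = alpha e a b u ++ alpha e a b v :=
  List.flatMap_append

lemma alpha_cons (c : A) (v : List A) :
    alpha e a b (c :: v) = e c :: ((if c = a then [b] else []) ++ alpha e a b v) := by
  by_cases h : c = a <;> simp [alpha, h]

lemma alpha_cons_self (v : List A) : alpha e a b (a :: v) = e a :: b :: alpha e a b v := by
  simp [alpha_cons]

lemma alpha_cons_of_ne {c : A} (hc : c ≠ a) (v : List A) :
    alpha e a b (c :: v) = e c :: alpha e a b v := by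
  simp [alpha_cons, hc]

lemma getLast?_alpha (w : List A) :
    (alpha e a b w).getLast? = w.getLast?.map fun c => if c = a then b else e c := by
  induction w using List.reverseRecOn with
  | nil => rfl
  | append_singleton w c _ =>
    by_cases h : c = a <;> simp [alpha, h]

lemma alpha_strictMono [LinearOrder A] [LinearOrder B] (he : StrictMono e) :
    StrictMono (alpha e a b) := by
  intro u v h
  induction h with
  | nil => rw [alpha_cons]; exact .nil
  | cons _ ih => rw [alpha_cons, alpha_cons]; exact .cons (.append_left _ ih _)
  | rel h => rw [alpha_cons, alpha_cons]; exact .rel (he h)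

lemma count_alpha [DecidableEq B] (he : Function.Injective e) (hb : ∀ c, e c ≠ b) (x : A)
    (w : List A) : (alpha e a b w).count (if x = a then b else e x) = w.count x := by
  induction w with
  | nil => rfl
  | cons c w ih =>
    by_cases hc : c = a <;> by_cases hx : x = a <;>
      simp [alpha_cons, hc, hx, List.count_cons, he.eq_iff, hb, (hb _).symm] <;> grind

lemma count_alpha_self [DecidableEq B] (he : Function.Injective e) (hb : ∀ c, e c ≠ b)
    (w : List A) : (alpha e a b w).count (e a) = w.count a := by
  induction w with
  | nil => rfl
  | cons c w ih =>
    by_cases hc : c = a <;> simp [alpha_cons, hc, List.count_cons, he.eq_iff] <;> grind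

lemma exists_rotationsFrom_alpha_perm (v u : List A) :
    ∃ N : List (List B), (rotationsFrom (alpha e a b v) (alpha e a b u)).Perm
        ((rotationsFrom v u).map (alpha e a b) ++ N) ∧
      N.length = v.count a ∧ ∀ x ∈ N, ∃ s, x = b :: (s ++ [e a]) := by
  induction v generalizing u with
  | nil => exact ⟨[], by simp [alpha, rotationsFrom]⟩
  | cons c v ih =>
    obtain ⟨N, hperm, hlen, hN⟩ := ih (u ++ [c])
    by_cases hc : c = a
    · subst hc
      refine ⟨(b :: (alpha e c b v ++ alpha e c b u ++ [e c])) :: N, ?_, by simp [hlen], ?_⟩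
      · have hu : alpha e c b (u ++ [c]) = alpha e c b u ++ [e c] ++ [b] := by simp [alpha]
        rw [hu] at hperm
        simp only [alpha_cons_self, rotationsFrom_cons, List.map_cons, alpha_append,
          List.cons_append]
        refine .cons _ ((hperm.cons _).trans ?_)
        simpa using List.perm_middle.symm
      · simpa using ⟨⟨_, (List.append_assoc _ _ _).symm⟩, hN⟩
    · refine ⟨N, ?_, by simp [hlen, hc], hN⟩
      have hu : alpha e a b (u ++ [c]) = alpha e a b u ++ [e c] := by simp [alpha, hc]
      rw [hu] at hperm
      simp only [alpha_cons_of_ne hc, rotationsFrom_cons, List.map_cons, alpha_append,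
        List.cons_append]
      exact hperm.cons _

lemma exists_rotations_alpha (w : List A) :
    ∃ N : Multiset (List B), rotations (alpha e a b w) = (rotations w).map (alpha e a b) + N ∧
      Multiset.card N = w.count a ∧ ∀ x ∈ N, ∃ s, x = b :: (s ++ [e a]) := by
  obtain ⟨N, hperm, hlen, hN⟩ := exists_rotationsFrom_alpha_perm (e := e) (a := a) (b := b) w []
  refine ⟨N, ?_, hlen, hN⟩
  rw [rotations_eq_rotationsFrom, rotations_eq_rotationsFrom]
  simpa [alpha] using Multiset.coe_eq_coe.2 hperm

lemma exists_cons_of_mem_map_alpha_rotations {w : List A} {x : List B}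
    (hx : x ∈ (rotations w).map (alpha e a b)) : ∃ c s, x = e c :: s := by
  obtain ⟨r, hr, rfl⟩ := Multiset.mem_map.1 hx
  obtain ⟨c, r, rfl⟩ := List.exists_cons_of_ne_nil (ne_nil_of_mem_rotations hr)
  exact ⟨c, _, alpha_cons c r⟩

end Alpha

section Sorting

lemma sort_add_of_forall_le {α : Type*} [LinearOrder α] {s t : Multiset α}
    (h : ∀ x ∈ s, ∀ y ∈ t, x ≤ y) :
    (s + t).sort (· ≤ ·) = s.sort (· ≤ ·) ++ t.sort (· ≤ ·) := by
  refine List.Perm.eq_of_pairwise' (Multiset.pairwise_sort _ _) ?_ ?_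
  · refine List.pairwise_append.2 ⟨Multiset.pairwise_sort _ _, Multiset.pairwise_sort _ _, ?_⟩
    intro x hx y hy
    exact h x ((Multiset.mem_sort _).1 hx) y ((Multiset.mem_sort _).1 hy)
  · rw [← Multiset.coe_eq_coe, ← Multiset.coe_add]
    simp only [Multiset.sort_eq]

lemma filterMap_getLast?_sort_eq_replicate {α : Type*} [LinearOrder α] {N : Multiset (List α)}
    {y : α} (h : ∀ x ∈ N, x.getLast? = some y) :
    (N.sort (· ≤ ·)).filterMap List.getLast? = List.replicate (Multiset.card N) y := by
  rw [List.filterMap_congr (g := fun _ => some y) fun x hx => h x ((Multiset.mem_sort _).1 hx),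
    ← Function.comp_def, List.filterMap_eq_map, List.map_const', Multiset.length_sort]

end Sorting

section BWT

variable [LinearOrder A] [LinearOrder B] {e : A → B} {a : A} {b : B}

lemma filterMap_getLast?_sort_map_alpha (he : StrictMono e) (R : Multiset (List A)) :
    ((R.map (alpha e a b)).sort (· ≤ ·)).filterMap List.getLast? =
      ((R.sort (· ≤ ·)).filterMap List.getLast?).map fun c => if c = a then b else e c := by
  rw [← Multiset.map_sort (alpha e a b) R (· ≤ ·) (· ≤ ·)
      fun _ _ _ _ => (alpha_strictMono he).le_iff_le.symm,
    List.filterMap_map, List.map_filterMap]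
  exact List.filterMap_congr fun x _ => getLast?_alpha x

lemma bwt_alpha_of_forall_lt (he : StrictMono e) (hb : ∀ c, e c < b) (w : List A) :
    bwt (alpha e a b w) =
      (bwt w).map (fun c => if c = a then b else e c) ++ List.replicate (w.count a) (e a) := by
  obtain ⟨N, hrot, hcard, hN⟩ := exists_rotations_alpha (e := e) (a := a) (b := b) w
  have hle : ∀ x ∈ (rotations w).map (alpha e a b), ∀ y ∈ N, x ≤ y := by
    intro x hx y hy
    obtain ⟨c, s, rfl⟩ := exists_cons_of_mem_map_alpha_rotations hx
    obtain ⟨s', rfl⟩ := hN y hy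
    exact le_of_lt (List.Lex.rel (hb c))
  rw [bwt_eq, bwt_eq, hrot, sort_add_of_forall_le hle, List.filterMap_append,
    filterMap_getLast?_sort_map_alpha he, filterMap_getLast?_sort_eq_replicate (N := N), hcard]
  intro x hx
  obtain ⟨s, rfl⟩ := hN x hx
  rw [← List.cons_append, List.getLast?_concat]

lemma bwt_alpha_of_forall_gt (he : StrictMono e) (hb : ∀ c, b < e c) (w : List A) :
    bwt (alpha e a b w) =
      List.replicate (w.count a) (e a) ++ (bwt w).map (fun c => if c = a then b else e c) := by
  obtain ⟨N, hrot, hcard, hN⟩ := exists_rotations_alpha (e := e) (a := a) (b := b) w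
  have hle : ∀ y ∈ N, ∀ x ∈ (rotations w).map (alpha e a b), y ≤ x := by
    intro y hy x hx
    obtain ⟨c, s, rfl⟩ := exists_cons_of_mem_map_alpha_rotations hx
    obtain ⟨s', rfl⟩ := hN y hy
    exact le_of_lt (List.Lex.rel (hb c))
  rw [bwt_eq, bwt_eq, hrot, add_comm, sort_add_of_forall_le hle, List.filterMap_append,
    filterMap_getLast?_sort_map_alpha he, filterMap_getLast?_sort_eq_replicate (N := N), hcard]
  intro x hx
  obtain ⟨s, rfl⟩ := hN x hx
  rw [← List.cons_append, List.getLast?_concat]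

end BWT

end BurrowsWheeler

section Clustering

open Finset BurrowsWheeler

lemma map_bwt_alpha_of_clustering [LinearOrder A] [Fintype A] [DecidableEq B] {e : A → B}
    {a : A} {b : B} {π : Equiv.Perm A} {w : List A} (hc : Clustering π w)
    (he : Function.Injective e) (hb : ∀ c, e c ≠ b) {π' : Equiv.Perm B}
    (hπ' : ∀ x, π' (e x) = if π x = a then b else e (π x)) :
    (bwt w).map (fun c => if c = a then b else e c) =
      ((univ.sort (· ≤ ·)).map fun x =>
        List.replicate ((alpha e a b w).count (π' (e x))) (π' (e x))).flatten := by
  rw [hc, List.map_flatten, List.map_map]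
  congr 1
  refine List.map_congr_left fun x _ => ?_
  rw [Function.comp_apply, List.map_replicate, hπ', count_alpha he hb]

variable [LinearOrder A] [Fintype A]

lemma sort_univ_withTop :
    (univ : Finset (WithTop A)).sort (· ≤ ·) =
      (univ.sort (· ≤ ·)).map ((↑) : A → WithTop A) ++ [⊤] := by
  have hnd : ((univ.sort (· ≤ ·)).map ((↑) : A → WithTop A) ++ [⊤]).Nodup := by
    simp [List.nodup_append, List.Nodup.map WithTop.coe_injective (sort_nodup _ _)]
  have huniv : (univ : Finset (WithTop A)) =
      ((univ.sort (· ≤ ·)).map ((↑) : A → WithTop A) ++ [⊤]).toFinset := by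
    ext x
    induction x using WithTop.recTopCoe <;> simp
  rw [huniv, List.toFinset_sort _ hnd, List.pairwise_append, List.pairwise_map]
  exact ⟨(pairwise_sort _ _).imp WithTop.coe_le_coe.2, List.pairwise_singleton _ _,
    fun _ _ _ hy => List.mem_singleton.1 hy ▸ le_top⟩

lemma sort_univ_withBot :
    (univ : Finset (WithBot A)).sort (· ≤ ·) =
      ⊥ :: (univ.sort (· ≤ ·)).map ((↑) : A → WithBot A) := by
  have hnd : (⊥ :: (univ.sort (· ≤ ·)).map ((↑) : A → WithBot A)).Nodup := by
    simp [List.Nodup.map WithBot.coe_injective (sort_nodup _ _)]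
  have huniv : (univ : Finset (WithBot A)) =
      (⊥ :: (univ.sort (· ≤ ·)).map ((↑) : A → WithBot A)).toFinset := by
    ext x
    induction x using WithBot.recBotCoe <;> simp
  rw [huniv, List.toFinset_sort _ hnd, List.pairwise_cons, List.pairwise_map]
  exact ⟨fun _ _ => bot_le, (pairwise_sort _ _).imp WithBot.coe_le_coe.2⟩

lemma Clustering.alpha_withTop {π : Equiv.Perm A} {w : List A} (hc : Clustering π w) (a : A) :
    Clustering ((Equiv.withTopCongr π).trans (Equiv.swap (a : WithTop A) ⊤))
      (alpha (↑) a ⊤ w) := by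
  rw [Clustering, bwt_alpha_of_forall_lt WithTop.coe_strictMono WithTop.coe_lt_top,
    map_bwt_alpha_of_clustering hc WithTop.coe_injective (fun _ => WithTop.coe_ne_top)
      (π' := (Equiv.withTopCongr π).trans (Equiv.swap (a : WithTop A) ⊤)),
    sort_univ_withTop, List.map_append, List.flatten_append, List.map_map]
  · simp [Function.comp_def,
      count_alpha_self WithTop.coe_injective (fun _ => WithTop.coe_ne_top)]
  · intro x
    by_cases h : π x = a <;> simp [h, Equiv.swap_apply_of_ne_of_ne]

lemma Clustering.alpha_withBot {π : Equiv.Perm A} {w : List A} (hc : Clustering π w) (a : A) :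
    Clustering ((Equiv.withBotCongr π).trans (Equiv.swap (a : WithBot A) ⊥))
      (alpha (↑) a ⊥ w) := by
  rw [Clustering, bwt_alpha_of_forall_gt WithBot.coe_strictMono WithBot.bot_lt_coe,
    map_bwt_alpha_of_clustering hc WithBot.coe_injective (fun _ => WithBot.coe_ne_bot)
      (π' := (Equiv.withBotCongr π).trans (Equiv.swap (a : WithBot A) ⊥)),
    sort_univ_withBot, List.map_cons, List.flatten_cons, List.map_map]
  · simp [Function.comp_def,
      count_alpha_self WithBot.coe_injective (fun _ => WithBot.coe_ne_bot)]
  · intro x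
    by_cases h : π x = a <;> simp [h, Equiv.swap_apply_of_ne_of_ne]

end Clustering

/-- `A'` is realized as `WithTop A` (with `b = ⊤`) and `A''` as `WithBot A` (with `b = ⊥`). -/
theorem clustering_alpha_new_letter_general {A : Type*} [LinearOrder A] [Fintype A] (w : List A)
    (π : Equiv.Perm A) (hc : Clustering π w) (a : A) :
    (∃ π' : Equiv.Perm (WithTop A),
      Clustering π'
        (w.flatMap fun c =>
          if c = a then [(a : WithTop A), (⊤ : WithTop A)] else [(c : WithTop A)])) ∧
    (∃ π'' : Equiv.Perm (WithBot A),
      Clustering π''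
        (w.flatMap fun c =>
          if c = a then [(a : WithBot A), (⊥ : WithBot A)] else [(c : WithBot A)])) :=
  ⟨⟨_, hc.alpha_withTop a⟩, ⟨_, hc.alpha_withBot a⟩⟩

/-- If `w` is primitive and `π`-clustering over `A` and `b` is a new letter not in `A`, then
`α_{a,b}(w)` is clustering both over `A' = {a₁ < … < a_k < b}` (realized as `WithTop A`,
with `b = ⊤`) and over `A'' = {b < a₁ < … < a_k}` (realized as `WithBot A`, with `b = ⊥`). -/
theorem clustering_alpha_new_letter {A : Type*} [LinearOrder A] [Fintype A] (w : List A)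
    (hw : Primitive w) (π : Equiv.Perm A) (hc : Clustering π w) (a : A) :
    (∃ π' : Equiv.Perm (WithTop A),
      Clustering π'
        (w.flatMap fun c =>
          if c = a then [(a : WithTop A), (⊤ : WithTop A)] else [(c : WithTop A)])) ∧
    (∃ π'' : Equiv.Perm (WithBot A),
      Clustering π''
        (w.flatMap fun c =>
          if c = a then [(a : WithBot A), (⊥ : WithBot A)] else [(c : WithBot A)])) :=
  clustering_alpha_new_letter_general w π hc a
end

section
/- Let T be a k-IET on I = [ℓ, r). Define Z(T) = [ℓ, r') where r' is the rightmost element of D(T) ∪ D(T⁻¹), and Y(T) = [ℓ', r) where ℓ' is the leftmost element of (D(T) ∪ D(T⁻¹)) ∩ (ℓ, r). If an interval J is strictly included in I and is admissible for T, then J ⊆ Z(T) or J ⊆ Y(T). -/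
/-- An interval exchange transformation on `[l, l + Σ len a)` over the ordered alphabet `A`,
with subinterval lengths `len` and permutation `perm`. -/
structure IET (A : Type*) [Fintype A] [LinearOrder A] where
  l : ℝ
  len : A → ℝ
  len_pos : ∀ a, 0 < len a
  perm : Equiv.Perm A

namespace IET

variable {A : Type*} [Fintype A] [LinearOrder A] (T : IET A)

/-- Right endpoint of the domain interval. -/
def right : ℝ := T.l + ∑ a, T.len a

/-- The domain `[ℓ, r)` of the IET. -/
def domain : Set ℝ := Set.Ico T.l T.right

/-- Left endpoint of the subinterval indexed by `a`. -/
def leftEnd (a : A) : ℝ := T.l + ∑ b ∈ Finset.univ.filter (· < a), T.len b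

/-- The subinterval `I_a`. -/
def seg (a : A) : Set ℝ := Set.Ico (T.leftEnd a) (T.leftEnd a + T.len a)

/-- Translation amount on `I_a`. -/
def τ (a : A) : ℝ :=
  (∑ b ∈ Finset.univ.filter (fun b => T.perm.symm b < T.perm.symm a), T.len b)
    - (∑ b ∈ Finset.univ.filter (· < a), T.len b)

open scoped Classical in
/-- The interval exchange transformation as a map `ℝ → ℝ` (identity off the domain). -/
noncomputable def map (x : ℝ) : ℝ :=
  if h : ∃ a, x ∈ T.seg a then x + T.τ h.choose else x

/-- The inverse transformation. -/
noncomputable def inv : ℝ → ℝ := Function.invFun T.map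

open scoped Classical in
/-- The letter of the subinterval containing `x`. -/
noncomputable def idx [Nonempty A] (x : ℝ) : A :=
  if h : ∃ a, x ∈ T.seg a then h.choose else Classical.arbitrary A

/-- The trajectory (natural coding) `Ω_T(x)` of `x`. -/
noncomputable def traj [Nonempty A] (x : ℝ) (n : ℕ) : A := T.idx (T.map^[n] x)

/-- The language of the IET: all finite factors of all trajectories. -/
def lang [Nonempty A] : Set (List A) :=
  { v | ∃ x ∈ T.domain, ∃ i : ℕ, v = (List.range v.length).map (fun j => T.traj x (i + j)) }

/-- The cylinder `I_w` of a word `w`. -/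
def cyl (w : List A) : Set ℝ :=
  { x | ∀ i : Fin w.length, T.map^[(i : ℕ)] x ∈ T.seg (w.get i) }

/-- Formal discontinuities of `T`. -/
def D : Set ℝ := { y | (∃ a, y = T.leftEnd a) ∧ y ≠ T.l }

/-- Formal discontinuities of the inverse of `T`. -/
def Dinv : Set ℝ :=
  { y | (∃ a, y = T.l + ∑ b ∈ Finset.univ.filter (fun b => T.perm.symm b < T.perm.symm a), T.len b)
      ∧ y ≠ T.l }

/-- `T^i` for an integer `i`. -/
noncomputable def iterZ (i : ℤ) (z : ℝ) : ℝ :=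
  if 0 ≤ i then T.map^[i.toNat] z else T.inv^[(-i).toNat] z

/-- Forward return time `ρ⁺_{J,T}(z)` of `z` to the open interval `(u, v)`. -/
noncomputable def rhoPlus (u v z : ℝ) : ℕ := sInf {n : ℕ | 0 < n ∧ T.map^[n] z ∈ Set.Ioo u v}

/-- Backward return time `ρ⁻_{J,T}(z)` of `z` to the open interval `(u, v)`. -/
noncomputable def rhoMinus (u v z : ℝ) : ℕ := sInf {n : ℕ | T.inv^[n] z ∈ Set.Ioo u v}

/-- The set `N_{J,T}(z)` for `J = [u, v)`. -/
noncomputable def Nset (u v z : ℝ) : Set ℝ :=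
  { y | ∃ i : ℤ, -(T.rhoMinus u v z : ℤ) ≤ i ∧ i ≤ (T.rhoPlus u v z : ℤ) - 1 ∧ y = T.iterZ i z }

/-- The set `Div(J, T)` for `J = [u, v)`. -/
noncomputable def Div (u v : ℝ) : Set ℝ := ⋃ γ ∈ T.D, T.Nset u v γ

/-- The interval `[u, v)` is admissible for `T`. -/
noncomputable def Admissible (u v : ℝ) : Prop :=
  u ∈ T.Div u v ∪ {T.right} ∧ v ∈ T.Div u v ∪ {T.right}

/-- Keane's regularity condition: the forward orbits of the formal discontinuities are
infinite and pairwise disjoint. -/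
def Regular : Prop :=
  ∀ γ ∈ T.D, ∀ γ' ∈ T.D, ∀ m n : ℕ, T.map^[m] γ = T.map^[n] γ' → γ = γ' ∧ m = n

end IET

open scoped Classical in
/-- First return time of `x` to `J` under `f` (junk value `0` if it never returns). -/
noncomputable def returnTime (f : ℝ → ℝ) (J : Set ℝ) (x : ℝ) : ℕ :=
  if h : ∃ n, 0 < n ∧ f^[n] x ∈ J then Nat.find h else 0

/-- First return map of `f` to `J`. -/
noncomputable def firstReturn (f : ℝ → ℝ) (J : Set ℝ) (x : ℝ) : ℝ :=
  f^[returnTime f J x] x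

/-- A finite word is a prefix of an infinite word (a sequence). -/
def SeqPrefix {α : Type*} (l : List α) (f : ℕ → α) : Prop :=
  ∀ i : Fin l.length, l.get i = f i
namespace IET

variable {A : Type*} [Fintype A] [LinearOrder A] (T : IET A)

open Finset

/-- Left endpoint of the image of the subinterval indexed by `a`. -/
noncomputable def cImg (a : A) : ℝ :=
  T.l + ∑ b ∈ Finset.univ.filter (fun b => T.perm.symm b < T.perm.symm a), T.len b

lemma len_nonneg (a : A) : 0 ≤ T.len a := (T.len_pos a).le

lemma filter_le_eq (f : A → A) (hf : Function.Injective f) (a : A) :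
    Finset.univ.filter (fun b => f b ≤ f a) =
      insert a (Finset.univ.filter (fun b => f b < f a)) := by
  ext b
  simp only [mem_filter, mem_univ, true_and, mem_insert]
  constructor
  · intro h
    rcases eq_or_lt_of_le h with h | h
    · exact Or.inl (hf h)
    · exact Or.inr h
  · rintro (rfl | h)
    · exact le_rfl
    · exact h.le

lemma gen_step (f : A → A) (hf : Function.Injective f) (a : A) :
    (∑ b ∈ Finset.univ.filter (fun b => f b < f a), T.len b) + T.len a =
      ∑ b ∈ Finset.univ.filter (fun b => f b ≤ f a), T.len b := by
  rw [filter_le_eq f hf a, Finset.sum_insert (by simp)]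
  ring

lemma gen_mono (f : A → A) (hf : Function.Injective f) {a a' : A} (h : f a < f a') :
    (∑ b ∈ Finset.univ.filter (fun b => f b < f a), T.len b) + T.len a ≤
      ∑ b ∈ Finset.univ.filter (fun b => f b < f a'), T.len b := by
  rw [gen_step T f hf a]
  apply Finset.sum_le_sum_of_subset_of_nonneg
  · intro b hb
    simp only [mem_filter, mem_univ, true_and] at *
    exact lt_of_le_of_lt hb h
  · exact fun b _ _ => T.len_nonneg b

lemma leftEnd_eq (a : A) :
    T.leftEnd a = T.l + ∑ b ∈ Finset.univ.filter (fun b => id b < id a), T.len b := rfl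

lemma leftEnd_add_len_le {a a' : A} (h : a < a') :
    T.leftEnd a + T.len a ≤ T.leftEnd a' := by
  rw [leftEnd_eq, leftEnd_eq]
  have := T.gen_mono id (fun _ _ h => h) (show id a < id a' from h)
  linarith

lemma cImg_add_len_le {a a' : A} (h : T.perm.symm a < T.perm.symm a') :
    T.cImg a + T.len a ≤ T.cImg a' := by
  have := T.gen_mono T.perm.symm T.perm.symm.injective h
  unfold cImg
  linarith

lemma l_le_leftEnd (a : A) : T.l ≤ T.leftEnd a := by
  rw [leftEnd_eq]
  have := Finset.sum_nonneg (fun b (_ : b ∈ Finset.univ.filter (fun b => id b < id a)) => T.len_nonneg b)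
  linarith

lemma l_le_cImg (a : A) : T.l ≤ T.cImg a := by
  unfold cImg
  have := Finset.sum_nonneg (fun b (_ : b ∈ Finset.univ.filter (fun b => T.perm.symm b < T.perm.symm a)) => T.len_nonneg b)
  linarith

lemma leftEnd_add_len_le_right (a : A) : T.leftEnd a + T.len a ≤ T.right := by
  rw [leftEnd_eq, right]
  have h1 := T.gen_step id (fun _ _ h => h) a
  have h2 : ∑ b ∈ Finset.univ.filter (fun b => id b ≤ id a), T.len b ≤ ∑ b, T.len b :=
    Finset.sum_le_sum_of_subset_of_nonneg (Finset.filter_subset _ _)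
      (fun b _ _ => T.len_nonneg b)
  linarith

lemma cImg_add_len_le_right (a : A) : T.cImg a + T.len a ≤ T.right := by
  unfold cImg right
  have h1 := T.gen_step T.perm.symm T.perm.symm.injective a
  have h2 : ∑ b ∈ Finset.univ.filter (fun b => T.perm.symm b ≤ T.perm.symm a), T.len b ≤ ∑ b, T.len b :=
    Finset.sum_le_sum_of_subset_of_nonneg (Finset.filter_subset _ _)
      (fun b _ _ => T.len_nonneg b)
  linarith

lemma leftEnd_add_τ (a : A) : T.leftEnd a + T.τ a = T.cImg a := by
  unfold leftEnd τ cImg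
  ring

lemma seg_unique {x : ℝ} {a b : A} (ha : x ∈ T.seg a) (hb : x ∈ T.seg b) : a = b := by
  rw [seg, Set.mem_Ico] at ha hb
  rcases lt_trichotomy a b with h | h | h
  · exact absurd (T.leftEnd_add_len_le h) (by linarith [ha.2, hb.1])
  · exact h
  · exact absurd (T.leftEnd_add_len_le h) (by linarith [hb.2, ha.1])

lemma map_seg {x : ℝ} {a : A} (h : x ∈ T.seg a) : T.map x = x + T.τ a := by
  have hex : ∃ a', x ∈ T.seg a' := ⟨a, h⟩
  unfold map
  rw [dif_pos hex, T.seg_unique hex.choose_spec h]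

lemma map_mem_img {x : ℝ} {a : A} (h : x ∈ T.seg a) :
    T.map x ∈ Set.Ico (T.cImg a) (T.cImg a + T.len a) := by
  rw [T.map_seg h]
  rw [seg, Set.mem_Ico] at h
  have hτ := T.leftEnd_add_τ a
  constructor <;> [linarith [h.1]; linarith [h.2]]

lemma cover [Nonempty A] {x : ℝ} (hx : x ∈ T.domain) : ∃ a, x ∈ T.seg a := by
  rw [domain, Set.mem_Ico] at hx
  classical
  set F := Finset.univ.filter (fun a : A => T.leftEnd a ≤ x) with hF
  have hminA : Finset.univ.min' Finset.univ_nonempty ∈ F := by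
    rw [hF, mem_filter]
    refine ⟨mem_univ _, ?_⟩
    have : Finset.univ.filter (fun b : A => b < Finset.univ.min' Finset.univ_nonempty) = ∅ := by
      apply Finset.filter_eq_empty_iff.mpr
      intro b _
      exact not_lt.mpr (Finset.min'_le _ _ (mem_univ b))
    rw [leftEnd_eq]
    simp only [id_eq] at this ⊢
    rw [this]
    simpa using hx.1
  have hFne : F.Nonempty := ⟨_, hminA⟩
  set a : A := F.max' hFne with ha
  have haF : a ∈ F := F.max'_mem hFne
  rw [hF, mem_filter] at haF
  refine ⟨a, ?_⟩
  rw [seg, Set.mem_Ico]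
  refine ⟨haF.2, ?_⟩
  by_contra hcon
  push_neg at hcon
  rcases (Finset.univ.filter (fun b : A => a < b)).eq_empty_or_nonempty with hG | hG
  · have huniv : Finset.univ.filter (fun b : A => id b ≤ id a) = Finset.univ := by
      ext b
      simp only [mem_filter, mem_univ, true_and, id_eq, iff_true]
      by_contra hb
      push_neg at hb
      have : b ∈ Finset.univ.filter (fun b : A => a < b) := by
        simp [hb]
      rw [hG] at this
      exact absurd this (Finset.notMem_empty b)
    have h1 := T.gen_step id (fun _ _ h => h) a
    rw [huniv] at h1
    rw [leftEnd_eq] at hcon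
    rw [right] at hx
    simp only [id_eq] at h1 hcon
    linarith [hx.2]
  · set a' : A := _root_.Finset.min' _ hG with ha'
    have ha'G : a' ∈ Finset.univ.filter (fun b : A => a < b) := Finset.min'_mem _ hG
    rw [mem_filter] at ha'G
    have hlt : a < a' := ha'G.2
    have hfeq : Finset.univ.filter (fun b : A => id b < id a') =
        Finset.univ.filter (fun b : A => id b ≤ id a) := by
      ext b
      simp only [mem_filter, mem_univ, true_and, id_eq]
      constructor
      · intro hb
        by_contra hb'
        push_neg at hb'
        have : b ∈ Finset.univ.filter (fun c : A => a < c) := by simp [hb']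
        exact absurd (Finset.min'_le _ _ this) (not_le.mpr hb)
      · intro hb
        exact lt_of_le_of_lt hb hlt
    have h1 := T.gen_step id (fun _ _ h => h) a
    have hle : T.leftEnd a' ≤ x := by
      rw [leftEnd_eq, hfeq, ← h1]
      rw [leftEnd_eq] at hcon
      linarith
    have : a' ∈ F := by rw [hF, mem_filter]; exact ⟨mem_univ _, hle⟩
    exact absurd (Finset.le_max' F a' this) (not_le.mpr hlt)

lemma seg_subset_domain (a : A) : T.seg a ⊆ T.domain := by
  intro x hx
  rw [seg, Set.mem_Ico] at hx
  rw [domain, Set.mem_Ico]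
  exact ⟨le_trans (T.l_le_leftEnd a) hx.1, lt_of_lt_of_le hx.2 (T.leftEnd_add_len_le_right a)⟩

lemma map_inj : Function.Injective T.map := by
  intro x y h
  by_cases hx : ∃ a, x ∈ T.seg a <;> by_cases hy : ∃ a, y ∈ T.seg a
  · obtain ⟨a, hxa⟩ := hx
    obtain ⟨b, hyb⟩ := hy
    rw [T.map_seg hxa, T.map_seg hyb] at h
    have hab : a = b := by
      by_contra hne
      have hs : T.perm.symm a ≠ T.perm.symm b := fun h' => hne (T.perm.symm.injective h')
      have hxI : x + T.τ a ∈ Set.Ico (T.cImg a) (T.cImg a + T.len a) := by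
        rw [← T.map_seg hxa]; exact T.map_mem_img hxa
      have hyI : y + T.τ b ∈ Set.Ico (T.cImg b) (T.cImg b + T.len b) := by
        rw [← T.map_seg hyb]; exact T.map_mem_img hyb
      rcases hs.lt_or_gt with hlt | hlt
      · have := T.cImg_add_len_le hlt
        have h1 := hxI.2; have h2 := hyI.1
        linarith
      · have := T.cImg_add_len_le hlt
        have h1 := hyI.2; have h2 := hxI.1
        linarith
    subst hab
    exact add_right_cancel h
  · exfalso
    obtain ⟨a, hxa⟩ := hx
    have : Nonempty A := ⟨a⟩
    have h1 : T.map x ∈ T.domain := by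
      have := T.map_mem_img hxa
      rw [Set.mem_Ico] at this
      rw [domain, Set.mem_Ico]
      exact ⟨le_trans (T.l_le_cImg a) this.1, lt_of_lt_of_le this.2 (T.cImg_add_len_le_right a)⟩
    have h2 : T.map y = y := by
      unfold map; rw [dif_neg hy]
    rw [h, h2] at h1
    exact hy (T.cover h1)
  · exfalso
    obtain ⟨a, hya⟩ := hy
    have : Nonempty A := ⟨a⟩
    have h1 : T.map y ∈ T.domain := by
      have := T.map_mem_img hya
      rw [Set.mem_Ico] at this
      rw [domain, Set.mem_Ico]
      exact ⟨le_trans (T.l_le_cImg a) this.1, lt_of_lt_of_le this.2 (T.cImg_add_len_le_right a)⟩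
    have h2 : T.map x = x := by
      unfold map; rw [dif_neg hx]
    rw [← h, h2] at h1
    exact hx (T.cover h1)
  · unfold map at h
    rw [dif_neg hx, dif_neg hy] at h
    exact h

lemma D_not_interior {γ : ℝ} (hγ : γ ∈ T.D) (s : A) :
    ¬ (T.leftEnd s < γ ∧ γ < T.leftEnd s + T.len s) := by
  obtain ⟨⟨a, rfl⟩, -⟩ := hγ
  rintro ⟨h1, h2⟩
  rcases lt_trichotomy a s with h | h | h
  · have := T.leftEnd_add_len_le h
    have := T.len_pos a
    linarith
  · subst h; linarith
  · have := T.leftEnd_add_len_le h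
    linarith

lemma DDinv_finite : (T.D ∪ T.Dinv).Finite := by
  apply Set.Finite.union
  · apply Set.Finite.subset (Set.finite_range T.leftEnd)
    rintro γ ⟨⟨a, rfl⟩, -⟩
    exact ⟨a, rfl⟩
  · apply Set.Finite.subset (Set.finite_range T.cImg)
    rintro γ ⟨⟨a, rfl⟩, -⟩
    exact ⟨a, rfl⟩

lemma D_mem_Ioo {γ : ℝ} (hγ : γ ∈ T.D) : γ ∈ Set.Ioo T.l T.right := by
  obtain ⟨⟨a, rfl⟩, hne⟩ := hγ
  constructor
  · exact lt_of_le_of_ne (T.l_le_leftEnd a) (Ne.symm hne)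
  · have := T.leftEnd_add_len_le_right a
    have := T.len_pos a
    linarith

end IET

/-- If an interval `J = [u, v)` is strictly included in `I` and admissible for `T`, then
`J ⊆ Z(T) = [ℓ, r')` or `J ⊆ Y(T) = [ℓ', r)`, where `r'` is the rightmost point of
`D(T) ∪ D(T⁻¹)` and `ℓ'` is the leftmost point of `(D(T) ∪ D(T⁻¹)) ∩ (ℓ, r)`. -/
theorem admissible_subset_Z_or_Y {A : Type*} [Fintype A] [LinearOrder A] (T : IET A)
    (u v : ℝ) (hsub : Set.Ico u v ⊂ T.domain) (hadm : T.Admissible u v) :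
    Set.Ico u v ⊆ Set.Ico T.l (sSup (T.D ∪ T.Dinv)) ∨
      Set.Ico u v ⊆ Set.Ico (sInf ((T.D ∪ T.Dinv) ∩ Set.Ioo T.l T.right)) T.right := by
  classical
  by_cases huv : u < v
  swap
  · left
    intro x hx
    rw [Set.mem_Ico] at hx
    exact absurd (lt_of_le_of_lt hx.1 hx.2) huv
  have hsub' : Set.Ico u v ⊆ T.domain := hsub.1
  have hlu : T.l ≤ u := by
    have := hsub' (Set.mem_Ico.mpr ⟨le_refl u, huv⟩)
    rw [IET.domain, Set.mem_Ico] at this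
    exact this.1
  have hvr : v ≤ T.right := by
    by_contra h
    push_neg at h
    have hx : max u T.right ∈ Set.Ico u v := Set.mem_Ico.mpr ⟨le_max_left _ _, max_lt huv h⟩
    have := hsub' hx
    rw [IET.domain, Set.mem_Ico] at this
    exact absurd this.2 (not_lt.2 (le_max_right _ _))
  have hstrict : T.l < u ∨ v < T.right := by
    by_contra h
    push_neg at h
    obtain ⟨h1, h2⟩ := h
    apply hsub.2
    intro x hx
    rw [IET.domain, Set.mem_Ico] at hx
    exact Set.mem_Ico.mpr ⟨le_trans h1 hx.1, lt_of_lt_of_le hx.2 h2⟩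
  set r' := sSup (T.D ∪ T.Dinv) with hr'def
  set l' := sInf ((T.D ∪ T.Dinv) ∩ Set.Ioo T.l T.right) with hl'def
  suffices h : v ≤ r' ∨ l' ≤ u by
    rcases h with h | h
    · left
      intro x hx
      rw [Set.mem_Ico] at hx ⊢
      exact ⟨le_trans hlu hx.1, lt_of_lt_of_le hx.2 h⟩
    · right
      intro x hx
      rw [Set.mem_Ico] at hx ⊢
      exact ⟨le_trans h hx.1, lt_of_lt_of_le hx.2 hvr⟩
  by_contra hcon
  push_neg at hcon
  obtain ⟨hrv, hul⟩ := hcon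
  -- basic facts about D ∪ Dinv
  have hbddA : BddAbove (T.D ∪ T.Dinv) := T.DDinv_finite.bddAbove
  have hbddB : BddBelow ((T.D ∪ T.Dinv) ∩ Set.Ioo T.l T.right) :=
    (T.DDinv_finite.inter_of_left _).bddBelow
  have hDuv : ∀ γ ∈ T.D, γ ∈ Set.Ioo u v := by
    intro γ hγ
    have h1 : γ ∈ Set.Ioo T.l T.right := T.D_mem_Ioo hγ
    have h2 : l' ≤ γ := csInf_le hbddB ⟨Or.inl hγ, h1⟩
    have h3 : γ ≤ r' := le_csSup hbddA (Or.inl hγ)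
    exact ⟨lt_of_lt_of_le hul h2, lt_of_le_of_lt h3 hrv⟩
  obtain ⟨hau, hav⟩ := hadm
  -- get a point p ∈ Div with the right properties
  obtain ⟨p, hpDiv, hpnot, hpS⟩ :
      ∃ p, p ∈ T.Div u v ∧ p ∉ Set.Ioo u v ∧
        ((T.l < p ∧ p ≤ u) ∨ (r' < p ∧ p < T.right)) := by
    rcases lt_or_ge v T.right with hv | hv
    · rcases hav with h | h
      · exact ⟨v, h, fun hc => absurd hc.2 (lt_irrefl v), Or.inr ⟨hrv, hv⟩⟩
      · exact absurd (Set.mem_singleton_iff.mp h) (ne_of_lt hv)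
    · have hveq : v = T.right := le_antisymm hvr hv
      have hlu' : T.l < u := by
        rcases hstrict with h | h
        · exact h
        · rw [hveq] at h; exact absurd h (lt_irrefl _)
      rcases hau with h | h
      · exact ⟨u, h, fun hc => absurd hc.1 (lt_irrefl u), Or.inl ⟨hlu', le_refl u⟩⟩
      · have := Set.mem_singleton_iff.mp h
        rw [← hveq] at this
        exact absurd this (ne_of_lt huv)
  simp only [IET.Div, Set.mem_iUnion] at hpDiv
  obtain ⟨γ, hγD, hpN⟩ := hpDiv
  obtain ⟨i, hi1, hi2, hpi⟩ := hpN
  have hγuv : γ ∈ Set.Ioo u v := hDuv γ hγD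
  have hρm : T.rhoMinus u v γ = 0 := by
    rw [IET.rhoMinus]
    apply Nat.sInf_eq_zero.mpr
    left
    simpa using hγuv
  rw [hρm] at hi1
  have hi0 : (0 : ℤ) ≤ i := by simpa using hi1
  set ρ := T.rhoPlus u v γ with hρdef
  have hiz : i ≠ 0 := by
    rintro rfl
    rw [IET.iterZ, if_pos le_rfl] at hpi
    simp only [Int.toNat_zero, Function.iterate_zero, id_eq] at hpi
    exact hpnot (hpi ▸ hγuv)
  set m := i.toNat with hmdef
  have him : (m : ℤ) = i := Int.toNat_of_nonneg hi0
  have hm1 : 1 ≤ m := by omega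
  have hmρ : m < ρ := by omega
  have hpm : T.map^[m] γ = p := by
    rw [IET.iterZ, if_pos hi0] at hpi
    exact hpi.symm
  have hmin : ∀ n, 0 < n → n < ρ → T.map^[n] γ ∉ Set.Ioo u v := by
    intro n hn1 hn2 hc
    have hle : T.rhoPlus u v γ ≤ n :=
      Nat.sInf_le (show n ∈ {k : ℕ | 0 < k ∧ T.map^[k] γ ∈ Set.Ioo u v} from ⟨hn1, hc⟩)
    exact absurd hle (not_le.2 hn2)
  -- alphabet setup
  have hγD' : (∃ a, γ = T.leftEnd a) ∧ γ ≠ T.l := hγD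
  have hAne : Nonempty A := ⟨hγD'.1.choose⟩
  set amin : A := Finset.univ.min' Finset.univ_nonempty with hamin
  have h2ne : (Finset.univ.erase amin).Nonempty := by
    rcases (Finset.univ.erase amin).eq_empty_or_nonempty with he | he
    · exfalso
      obtain ⟨⟨a, hae⟩, hne⟩ := hγD'
      subst hae
      have haa : a = amin := by
        by_contra hne'
        have : a ∈ Finset.univ.erase amin := Finset.mem_erase.mpr ⟨hne', Finset.mem_univ a⟩
        rw [he] at this
        exact absurd this (Finset.notMem_empty a)
      apply hne
      rw [haa, IET.leftEnd_eq]
      have : Finset.univ.filter (fun b : A => id b < id amin) = ∅ := by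
        apply Finset.filter_eq_empty_iff.mpr
        intro b _
        exact not_lt.mpr (Finset.min'_le _ _ (Finset.mem_univ b))
      rw [this]
      simp
    · exact he
  set amin2 : A := (Finset.univ.erase amin).min' h2ne with hamin2
  have hamin2mem : amin2 ∈ Finset.univ.erase amin := Finset.min'_mem _ _
  have hamin2ne : amin2 ≠ amin := (Finset.mem_erase.mp hamin2mem).1
  have haminlt : amin < amin2 :=
    lt_of_le_of_ne (Finset.min'_le _ _ (Finset.mem_univ amin2)) (Ne.symm hamin2ne)
  set amax : A := Finset.univ.max' Finset.univ_nonempty with hamax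
  set b0 : A := T.perm amin with hb0
  set b1 : A := T.perm amax with hb1
  set c2 : A := T.perm amin2 with hc2
  have hsymmb0 : T.perm.symm b0 = amin := T.perm.symm_apply_apply amin
  have hsymmb1 : T.perm.symm b1 = amax := T.perm.symm_apply_apply amax
  have hsymmc2 : T.perm.symm c2 = amin2 := T.perm.symm_apply_apply amin2
  -- cImg b0 = l
  have hcb0 : T.cImg b0 = T.l := by
    rw [IET.cImg]
    have : Finset.univ.filter (fun b : A => T.perm.symm b < T.perm.symm b0) = ∅ := by
      apply Finset.filter_eq_empty_iff.mpr
      intro b _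
      rw [hsymmb0]
      exact not_lt.mpr (Finset.min'_le _ _ (Finset.mem_univ _))
    rw [this]
    simp
  -- cImg b1 + len b1 = right
  have hcb1 : T.cImg b1 + T.len b1 = T.right := by
    have h1 := T.gen_step T.perm.symm T.perm.symm.injective b1
    have h2 : Finset.univ.filter (fun b : A => T.perm.symm b ≤ T.perm.symm b1) = Finset.univ := by
      apply Finset.filter_true_of_mem
      intro b _
      rw [hsymmb1]
      exact Finset.le_max' _ _ (Finset.mem_univ _)
    rw [h2] at h1
    rw [IET.cImg, IET.right]
    linarith
  -- cImg c2 = l + len b0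
  have hcc2 : T.cImg c2 = T.l + T.len b0 := by
    rw [IET.cImg]
    have : Finset.univ.filter (fun b : A => T.perm.symm b < T.perm.symm c2) = {b0} := by
      ext b
      simp only [Finset.mem_filter, Finset.mem_univ, true_and, Finset.mem_singleton]
      rw [hsymmc2]
      constructor
      · intro hb
        have hbmin : T.perm.symm b = amin := by
          by_contra hne
          have : T.perm.symm b ∈ Finset.univ.erase amin :=
            Finset.mem_erase.mpr ⟨hne, Finset.mem_univ _⟩
          exact absurd (Finset.min'_le _ _ this) (not_le.mpr hb)
        have : b = T.perm amin := by
          rw [← hbmin]; exact (T.perm.apply_symm_apply b).symm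
        rw [this]
      · rintro rfl
        rw [hsymmb0]
        exact haminlt
    rw [this, Finset.sum_singleton]
  have hb0c2 : b0 ≠ c2 := fun h => hamin2ne (by
    have := congrArg T.perm.symm h
    rw [hsymmb0, hsymmc2] at this
    exact this.symm)
  -- l + len b0 < right
  have hlenb0lt : T.l + T.len b0 < T.right := by
    rw [IET.right]
    have hsub2 : ({b0, c2} : Finset A) ⊆ Finset.univ := Finset.subset_univ _
    have := Finset.sum_le_sum_of_subset_of_nonneg hsub2 (fun b _ _ => T.len_nonneg b)
    rw [Finset.sum_pair hb0c2] at this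
    have := T.len_pos c2
    linarith
  -- l' ≤ l + len b0
  have hl'le : l' ≤ T.l + T.len b0 := by
    apply csInf_le hbddB
    constructor
    · right
      refine ⟨⟨c2, ?_⟩, ?_⟩
      · rw [← hcc2]; rfl
      · have := T.len_pos b0
        intro h
        linarith
    · exact ⟨by linarith [T.len_pos b0], hlenb0lt⟩
  -- cImg b1 > l and r' ≥ cImg b1
  have hcb1gt : T.l < T.cImg b1 := by
    rw [IET.cImg]
    have hb0mem : b0 ∈ Finset.univ.filter (fun b : A => T.perm.symm b < T.perm.symm b1) := by
      simp only [Finset.mem_filter, Finset.mem_univ, true_and]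
      rw [hsymmb0, hsymmb1]
      exact lt_of_lt_of_le haminlt (Finset.le_max' _ _ (Finset.mem_univ _))
    have := Finset.single_le_sum (fun b (_ : b ∈ Finset.univ.filter
      (fun b : A => T.perm.symm b < T.perm.symm b1)) => T.len_nonneg b) hb0mem
    have := T.len_pos b0
    linarith
  have hr'ge : T.cImg b1 ≤ r' := by
    apply le_csSup hbddA
    right
    refine ⟨⟨b1, rfl⟩, ne_of_gt hcb1gt⟩
  -- the step lemma
  have step : ∀ x y : ℝ, T.map y = x → ((T.l < x ∧ x ≤ u) ∨ (r' < x ∧ x < T.right)) →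
      ∃ s, T.leftEnd s < y ∧ y < T.leftEnd s + T.len s := by
    intro x y hmap hx
    rcases hx with ⟨hx1, hx2⟩ | ⟨hx1, hx2⟩
    · refine ⟨b0, ?_⟩
      have hτ := T.leftEnd_add_τ b0
      have hxgt : T.cImg b0 < x := by rw [hcb0]; exact hx1
      have hxlt : x < T.cImg b0 + T.len b0 := by
        rw [hcb0]
        calc x ≤ u := hx2
        _ < l' := hul
        _ ≤ T.l + T.len b0 := hl'le
      have hyseg : x - T.τ b0 ∈ T.seg b0 := by
        rw [IET.seg, Set.mem_Ico]
        constructor <;> linarith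
      have hy : y = x - T.τ b0 := by
        apply T.map_inj
        rw [hmap, T.map_seg hyseg]
        ring
      rw [hy]
      constructor <;> linarith
    · refine ⟨b1, ?_⟩
      have hτ := T.leftEnd_add_τ b1
      have hxgt : T.cImg b1 < x := lt_of_le_of_lt hr'ge hx1
      have hxlt : x < T.cImg b1 + T.len b1 := by rw [hcb1]; exact hx2
      have hyseg : x - T.τ b1 ∈ T.seg b1 := by
        rw [IET.seg, Set.mem_Ico]
        constructor <;> linarith
      have hy : y = x - T.τ b1 := by
        apply T.map_inj
        rw [hmap, T.map_seg hyseg]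
        ring
      rw [hy]
      constructor <;> linarith
  -- the main induction
  have main : ∀ n, n ≤ m →
      ((T.l < T.map^[n] γ ∧ T.map^[n] γ ≤ u) ∨ (r' < T.map^[n] γ ∧ T.map^[n] γ < T.right)) →
      1 ≤ n → False := by
    intro n
    induction n with
    | zero => intro _ _ h; exact absurd h (by norm_num)
    | succ n ih =>
      intro hnm hS _
      have hmapy : T.map (T.map^[n] γ) = T.map^[n + 1] γ :=
        (Function.iterate_succ_apply' _ _ _).symm
      obtain ⟨s, hs1, hs2⟩ := step _ _ hmapy hS
      rcases Nat.eq_zero_or_pos n with rfl | hn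
      · simp only [Function.iterate_zero, id_eq] at hs1 hs2
        exact T.D_not_interior hγD s ⟨hs1, hs2⟩
      · have hnρ : n < ρ := lt_of_lt_of_le (Nat.lt_succ_self n) (le_of_lt (lt_of_le_of_lt hnm hmρ))
        have hnot : T.map^[n] γ ∉ Set.Ioo u v := hmin n hn hnρ
        apply ih (le_of_lt (lt_of_lt_of_le (Nat.lt_succ_self n) hnm)) ?_ hn
        have hl : T.l < T.map^[n] γ := lt_of_le_of_lt (T.l_le_leftEnd s) hs1
        have hr : T.map^[n] γ < T.right := lt_of_lt_of_le hs2 (T.leftEnd_add_len_le_right s)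
        by_cases hcu : T.map^[n] γ ≤ u
        · exact Or.inl ⟨hl, hcu⟩
        · push_neg at hcu
          have hge : v ≤ T.map^[n] γ := by
            by_contra h
            push_neg at h
            exact hnot ⟨hcu, h⟩
          exact Or.inr ⟨lt_of_lt_of_le hrv hge, hr⟩
  exact main m le_rfl (hpm ▸ hpS) hm1
end
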